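/- There exists a constant C > 0 such that for all ξ, η ∈ ℝ³ with ξ ≠ 0 and ξ ≠ η, the Laplacian of Φ₁ in ξ, namely Δ_ξΦ₁(ξ,η) = (p''(|ξ|) + 2p'(|ξ|)/|ξ|) − (p''(|ξ−η|) + 2p'(|ξ−η|)/|ξ−η|), satisfies |Δ_ξΦ₁(ξ,η)| ≤ C·( |η| / (⟨max(|ξ−η|,|ξ|)⟩ · ⟨min(|ξ−η|,|ξ|)⟩³) + |η| / (|ξ−η|·|ξ|) ). -/

import Mathlib

noncomputable def q (r : ℝ) : ℝ := Real.sqrt ((2 + r ^ 2) / (1 + r ^ 2))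
noncomputable def p (r : ℝ) : ℝ := r * q r
noncomputable def Φ₁ (ξ η : EuclideanSpace ℝ (Fin 3)) : ℝ :=
  p ‖ξ‖ - p ‖ξ - η‖ - p ‖η‖

/-!
Write `Δp(r) = p''(r) + 2 p'(r) / r`. Then `r Δp(r)` is bounded and its derivative is
`O(r / ⟨r⟩⁶)`. Split `Δp(a) - Δp(b) = (g a - g b) / a + g b (b - a) / (a b)` with `g = r Δp`:
the second term gives the `|η| / (|ξ - η| |ξ|)` part. For the first, when the radii are comparable
(`max ≤ 2 min`) the mean value theorem gives the `⟨max⟩⁻¹ ⟨min⟩⁻³` part; otherwise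
`|η| ≥ max - min ≥ max / 2`, and `2 sup |g| / a` is already of size `|η| / (a b)`.
-/

open Real

theorem sqrt_one_add_sq_mul_pow_three_le {m M : ℝ} (hM₀ : 0 ≤ M) (hM : M ≤ 2 * m) :
    √(1 + M ^ 2) * √(1 + m ^ 2) ^ 3 ≤ 2 * (1 + m ^ 2) ^ 3 := by
  have hsq : √(1 + m ^ 2) ^ 2 = 1 + m ^ 2 := sq_sqrt (by positivity)
  have hM' : √(1 + M ^ 2) ≤ 2 * √(1 + m ^ 2) :=
    (sqrt_le_left (by positivity)).2 (by nlinarith)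
  calc √(1 + M ^ 2) * √(1 + m ^ 2) ^ 3 ≤ 2 * √(1 + m ^ 2) * √(1 + m ^ 2) ^ 3 := by gcongr
    _ = 2 * (√(1 + m ^ 2) ^ 2) ^ 2 := by ring
    _ ≤ 2 * (1 + m ^ 2) ^ 3 := by
      rw [hsq]; gcongr; exact le_add_of_nonneg_right (sq_nonneg m); norm_num

section

open Set

variable {g g' : ℝ → ℝ} {K L : ℝ}

theorem abs_sub_le_of_abs_deriv_le (hL : 0 ≤ L) (hderiv : ∀ x, 0 < x → HasDerivAt g (g' x) x)
    (hg' : ∀ x, 0 < x → |g' x| ≤ L * x / (1 + x ^ 2) ^ 3) {a b : ℝ} (ha : 0 < a) (hb : 0 < b) :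
    |g a - g b| ≤ L * max a b / (1 + min a b ^ 2) ^ 3 * |a - b| := by
  have hmin : 0 < min a b := lt_min ha hb
  refine (convex_uIcc b a).norm_image_sub_le_of_norm_hasDerivWithin_le
    (fun x hx => (hderiv x (hmin.trans_le ?_)).hasDerivWithinAt) (fun x hx => ?_)
    left_mem_uIcc right_mem_uIcc
  · rw [uIcc_comm] at hx; exact hx.1
  · rw [uIcc_comm] at hx
    calc ‖g' x‖ ≤ L * x / (1 + x ^ 2) ^ 3 := hg' x (hmin.trans_le hx.1)
      _ ≤ L * max a b / (1 + min a b ^ 2) ^ 3 := by gcongr; exacts [hx.2, hx.1]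

theorem abs_div_sub_div_le (hg : ∀ x, 0 < x → |g x| ≤ K)
    (hderiv : ∀ x, 0 < x → HasDerivAt g (g' x) x)
    (hg' : ∀ x, 0 < x → |g' x| ≤ L * x / (1 + x ^ 2) ^ 3) {a b e : ℝ} (ha : 0 < a) (hb : 0 < b)
    (hab : |a - b| ≤ e) :
    |g a / a - g b / b| ≤ 4 * L * (e / (√(1 + max a b ^ 2) * √(1 + min a b ^ 2) ^ 3)) +
      5 * K * (e / (a * b)) := by
  set m := min a b
  set M := max a b
  have hL : 0 ≤ L := by
    have h := (abs_nonneg _).trans (hg' 1 one_pos)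
    norm_num at h
    linarith
  have hK : 0 ≤ K := (abs_nonneg _).trans (hg 1 one_pos)
  have he : 0 ≤ e := (abs_nonneg _).trans hab
  have hm : 0 < m := lt_min ha hb
  have hMm : M - m ≤ e := by rw [max_sub_min_eq_abs, abs_sub_comm]; exact hab
  have hsplit : g a / a - g b / b = (g a - g b) / a + g b * (b - a) / (a * b) := by
    field_simp; ring
  have hsecond : |g b * (b - a) / (a * b)| ≤ K * (e / (a * b)) := by
    rw [abs_div, abs_mul, abs_sub_comm, abs_of_pos (mul_pos ha hb), mul_div_assoc]
    gcongr
    exact hg b hb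
  have hfirst : |(g a - g b) / a| ≤ 4 * L * (e / (√(1 + M ^ 2) * √(1 + m ^ 2) ^ 3)) +
      4 * K * (e / (a * b)) := by
    rw [abs_div, abs_of_pos ha]
    rcases le_or_gt M (2 * m) with hnear | hfar
    · have hw := sqrt_one_add_sq_mul_pow_three_le (hm.trans_le min_le_max).le hnear
      calc |g a - g b| / a ≤ L * M / (1 + m ^ 2) ^ 3 * e / a := by
            gcongr; exact (abs_sub_le_of_abs_deriv_le hL hderiv hg' ha hb).trans (by gcongr)
        _ = L * e / (1 + m ^ 2) ^ 3 * (M / a) := by ring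
        _ ≤ L * e / (1 + m ^ 2) ^ 3 * 2 := by
            gcongr; rw [div_le_iff₀ ha]; linarith [min_le_left a b]
        _ = 4 * L * (e / (2 * (1 + m ^ 2) ^ 3)) := by field_simp; ring
        _ ≤ 4 * L * (e / (√(1 + M ^ 2) * √(1 + m ^ 2) ^ 3)) := by gcongr
        _ ≤ _ := le_add_of_nonneg_right (by positivity)
    · have hb2e : b ≤ 2 * e := by linarith [le_max_right a b]
      calc |g a - g b| / a ≤ 2 * K / a := by
            gcongr; exact (abs_sub _ _).trans (by linarith [hg a ha, hg b hb])
        _ = 2 * K * b / (a * b) := by field_simp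
        _ ≤ 2 * K * (2 * e) / (a * b) := by gcongr
        _ = 4 * K * (e / (a * b)) := by ring
        _ ≤ _ := le_add_of_nonneg_left (by positivity)
  calc |g a / a - g b / b| ≤ |(g a - g b) / a| + |g b * (b - a) / (a * b)| := by
        rw [hsplit]; exact abs_add_le _ _
    _ ≤ _ := by linarith

end

noncomputable def radialLaplacian (f : ℝ → ℝ) (r : ℝ) : ℝ :=
  deriv (deriv f) r + 2 * deriv f r / r

-- Closed forms of `p'`, `p''`, `r Δp(r)` and its derivative, written in `u = 1 + r²`.
noncomputable def dp (r : ℝ) : ℝ := ((1 + r ^ 2) ^ 2 + 1) / (q r * (1 + r ^ 2) ^ 2)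

noncomputable def d2p (r : ℝ) : ℝ :=
  r * ((1 + r ^ 2) ^ 2 - 4 * (1 + r ^ 2) - 3) / (q r ^ 3 * (1 + r ^ 2) ^ 4)

noncomputable def rLapP (r : ℝ) : ℝ :=
  (2 * (1 + r ^ 2) ^ 4 + 3 * (1 + r ^ 2) ^ 3 - 3 * (1 + r ^ 2) ^ 2 + 3 * (1 + r ^ 2) + 3) /
    (q r ^ 3 * (1 + r ^ 2) ^ 4)

noncomputable def rLapPDeriv (r : ℝ) : ℝ :=
  3 * r * (5 * (1 + r ^ 2) ^ 3 - 5 * (1 + r ^ 2) ^ 2 - 11 * (1 + r ^ 2) - 5) /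
    (q r ^ 5 * (1 + r ^ 2) ^ 6)

theorem q_pos (r : ℝ) : 0 < q r := sqrt_pos.2 (by positivity)

theorem q_sq_mul (r : ℝ) : q r ^ 2 * (1 + r ^ 2) = 2 + r ^ 2 := by
  rw [q, sq_sqrt (by positivity)]
  field_simp

theorem one_le_q (r : ℝ) : 1 ≤ q r :=
  le_sqrt_of_sq_le (by rw [one_pow, le_div_iff₀ (by positivity)]; linarith)

theorem hasDerivAt_one_add_sq (r : ℝ) : HasDerivAt (fun r : ℝ => 1 + r ^ 2) (2 * r) r := by
  simpa using (hasDerivAt_pow 2 r).const_add 1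

theorem hasDerivAt_q (r : ℝ) : HasDerivAt q (-r / (q r * (1 + r ^ 2) ^ 2)) r := by
  have hu : 1 + r ^ 2 ≠ 0 := by positivity
  have hquot : HasDerivAt (fun r : ℝ => (2 + r ^ 2) / (1 + r ^ 2))
      ((2 * r * (1 + r ^ 2) - (2 + r ^ 2) * (2 * r)) / (1 + r ^ 2) ^ 2) r := by
    refine HasDerivAt.div ?_ (hasDerivAt_one_add_sq r) hu
    simpa using (hasDerivAt_pow 2 r).const_add 2
  refine ((hasDerivAt_sqrt (by positivity)).comp r hquot).congr_deriv ?_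
  have := (q_pos r).ne'
  rw [← q]
  field_simp
  ring

theorem hasDerivAt_p (r : ℝ) : HasDerivAt p (dp r) r := by
  refine ((hasDerivAt_id r).mul (hasDerivAt_q r)).congr_deriv ?_
  have := (q_pos r).ne'
  rw [dp, id]
  field_simp
  linear_combination (1 + r ^ 2) * q_sq_mul r

theorem hasDerivAt_dp (r : ℝ) : HasDerivAt dp (d2p r) r := by
  have hu2 : HasDerivAt (fun r : ℝ => (1 + r ^ 2) ^ 2) (2 * (1 + r ^ 2) ^ 1 * (2 * r)) r :=
    (hasDerivAt_one_add_sq r).pow 2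
  have hden : HasDerivAt (fun r => q r * (1 + r ^ 2) ^ 2)
      (-r / (q r * (1 + r ^ 2) ^ 2) * (1 + r ^ 2) ^ 2 + q r * (2 * (1 + r ^ 2) ^ 1 * (2 * r))) r :=
    (hasDerivAt_q r).mul hu2
  have := (q_pos r).ne'
  refine ((hu2.add_const 1).div hden (by positivity)).congr_deriv ?_
  rw [d2p]
  field_simp
  linear_combination (-4 * r) * q_sq_mul r

theorem hasDerivAt_rLapP (r : ℝ) : HasDerivAt rLapP (rLapPDeriv r) r := by
  have hu := hasDerivAt_one_add_sq r
  have hnum : HasDerivAt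
      (fun r : ℝ => 2 * (1 + r ^ 2) ^ 4 + 3 * (1 + r ^ 2) ^ 3 - 3 * (1 + r ^ 2) ^ 2 +
        3 * (1 + r ^ 2) + 3)
      ((8 * (1 + r ^ 2) ^ 3 + 9 * (1 + r ^ 2) ^ 2 - 6 * (1 + r ^ 2) + 3) * (2 * r)) r :=
    ((((((hu.pow 4).const_mul 2).add ((hu.pow 3).const_mul 3)).sub
      ((hu.pow 2).const_mul 3)).add (hu.const_mul 3)).add_const 3).congr_deriv (by ring)
  have hden : HasDerivAt (fun r => q r ^ 3 * (1 + r ^ 2) ^ 4)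
      (3 * q r ^ 2 * (-r / (q r * (1 + r ^ 2) ^ 2)) * (1 + r ^ 2) ^ 4 +
        q r ^ 3 * (4 * (1 + r ^ 2) ^ 3 * (2 * r))) r :=
    (((hasDerivAt_q r).pow 3).mul (hu.pow 4)).congr_deriv (by simp)
  have := (q_pos r).ne'
  refine (hnum.div hden (by positivity)).congr_deriv ?_
  rw [rLapPDeriv]
  field_simp
  linear_combination (-6 * r * (r ^ 6 + r ^ 4 + 2 * r ^ 2 + 6)) * q_sq_mul r

theorem radialLaplacian_p {r : ℝ} (hr : r ≠ 0) : radialLaplacian p r = rLapP r / r := by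
  have hdp : deriv p = dp := funext fun r => (hasDerivAt_p r).deriv
  have hd2p : deriv dp = d2p := funext fun r => (hasDerivAt_dp r).deriv
  have := (q_pos r).ne'
  rw [radialLaplacian, hdp, hd2p, d2p, dp, rLapP]
  field_simp
  linear_combination (2 * (1 + r ^ 2) * ((1 + r ^ 2) ^ 2 + 1)) * q_sq_mul r

theorem abs_rLapP_le (r : ℝ) : |rLapP r| ≤ 11 := by
  have hu : 1 ≤ 1 + r ^ 2 := le_add_of_nonneg_right (sq_nonneg r)
  have hq : 1 ≤ q r ^ 3 := one_le_pow₀ (one_le_q r)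
  rw [rLapP]
  generalize 1 + r ^ 2 = u at *
  have h1 : u ≤ u ^ 4 := le_self_pow₀ hu (by norm_num)
  have h2 : u ^ 2 ≤ u ^ 3 := pow_le_pow_right₀ hu (by norm_num)
  have h3 : u ^ 3 ≤ u ^ 4 := pow_le_pow_right₀ hu (by norm_num)
  have hN : 0 < 2 * u ^ 4 + 3 * u ^ 3 - 3 * u ^ 2 + 3 * u + 3 := by nlinarith
  calc |(2 * u ^ 4 + 3 * u ^ 3 - 3 * u ^ 2 + 3 * u + 3) / (q r ^ 3 * u ^ 4)|
      = (2 * u ^ 4 + 3 * u ^ 3 - 3 * u ^ 2 + 3 * u + 3) / (q r ^ 3 * u ^ 4) :=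
        abs_of_pos (by positivity)
    _ ≤ 11 * u ^ 4 / (1 * u ^ 4) := by gcongr; nlinarith
    _ = 11 := by field_simp

theorem abs_rLapPDeriv_le {r : ℝ} (hr : 0 ≤ r) : |rLapPDeriv r| ≤ 78 * r / (1 + r ^ 2) ^ 3 := by
  have hu : 1 ≤ 1 + r ^ 2 := le_add_of_nonneg_right (sq_nonneg r)
  have hq : 1 ≤ q r ^ 5 := one_le_pow₀ (one_le_q r)
  rw [rLapPDeriv]
  generalize 1 + r ^ 2 = u at *
  have hS : |5 * u ^ 3 - 5 * u ^ 2 - 11 * u - 5| ≤ 26 * u ^ 3 := by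
    have h1 : u ≤ u ^ 3 := le_self_pow₀ hu (by norm_num)
    have h2 : u ^ 2 ≤ u ^ 3 := pow_le_pow_right₀ hu (by norm_num)
    rw [abs_le]; constructor <;> nlinarith
  calc |3 * r * (5 * u ^ 3 - 5 * u ^ 2 - 11 * u - 5) / (q r ^ 5 * u ^ 6)|
      = 3 * r * |5 * u ^ 3 - 5 * u ^ 2 - 11 * u - 5| / (q r ^ 5 * u ^ 6) := by
        rw [abs_div, abs_mul, abs_of_nonneg (by positivity : 0 ≤ 3 * r),
          abs_of_pos (by positivity : 0 < q r ^ 5 * u ^ 6)]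
    _ ≤ 3 * r * (26 * u ^ 3) / (1 * u ^ 6) := by gcongr
    _ = 78 * r / u ^ 3 := by field_simp; ring

theorem stmt10 :
    ∃ C : ℝ, 0 < C ∧
      ∀ ξ η : EuclideanSpace ℝ (Fin 3), ξ ≠ 0 → ξ ≠ η →
        |(deriv (deriv p) ‖ξ‖ + 2 * deriv p ‖ξ‖ / ‖ξ‖) -
            (deriv (deriv p) ‖ξ - η‖ + 2 * deriv p ‖ξ - η‖ / ‖ξ - η‖)| ≤
          C * (‖η‖ / (Real.sqrt (1 + max ‖ξ - η‖ ‖ξ‖ ^ 2) *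
                Real.sqrt (1 + min ‖ξ - η‖ ‖ξ‖ ^ 2) ^ 3) +
              ‖η‖ / (‖ξ - η‖ * ‖ξ‖)) := by
  refine ⟨312, by norm_num, fun ξ η hξ hξη => ?_⟩
  have ha : 0 < ‖ξ - η‖ := norm_pos_iff.2 (sub_ne_zero.2 hξη)
  have hb : 0 < ‖ξ‖ := norm_pos_iff.2 hξ
  have hab : |‖ξ - η‖ - ‖ξ‖| ≤ ‖η‖ := by simpa using abs_norm_sub_norm_le (ξ - η) ξ
  change |radialLaplacian p ‖ξ‖ - radialLaplacian p ‖ξ - η‖| ≤ _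
  rw [abs_sub_comm, radialLaplacian_p ha.ne', radialLaplacian_p hb.ne']
  have hest := abs_div_sub_div_le (fun x _ => abs_rLapP_le x) (fun x _ => hasDerivAt_rLapP x)
    (fun x hx => abs_rLapPDeriv_le hx.le) ha hb hab
  have hpos : 0 ≤ ‖η‖ / (‖ξ - η‖ * ‖ξ‖) := by positivity
  linarith
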